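/- arXiv:2107.10209 — 5 statements merged into one kernel-verified Lean document; each statement's English description precedes it below -/
import Mathlib

section
/- (Turán's inequality for Hermite polynomials) For every natural number k and every real x, He_{k+1}(x)² − He_k(x)·He_{k+2}(x) = k! · Σ_{i=0}^{k} He_i(x)²/i!, and in particular He_{k+1}(x)² − He_k(x)·He_{k+2}(x) > 0. -/
/-- The probabilist's Hermite polynomials. -/
noncomputable def He : ℕ → ℝ → ℝ
  | 0, _ => 1
  | 1, x => x
  | (n+2), x => x * He (n+1) x - (n+1 : ℝ) * He n x

theorem turan_inequality_hermite (k : ℕ) (x : ℝ) :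
    (He (k+1) x)^2 - He k x * He (k+2) x
      = (Nat.factorial k : ℝ) * ∑ i ∈ Finset.range (k+1), (He i x)^2 / (Nat.factorial i : ℝ)
    ∧ 0 < (He (k+1) x)^2 - He k x * He (k+2) x := by
  have hid : (He (k+1) x)^2 - He k x * He (k+2) x
      = (Nat.factorial k : ℝ) * ∑ i ∈ Finset.range (k+1), (He i x)^2 / (Nat.factorial i : ℝ) := by
    induction k with
    | zero => simp [He]; ring
    | succ n ih =>
      have hfac : (Nat.factorial (n+1) : ℝ) ≠ 0 := by positivity
      have hrec : He (n+3) x = x * He (n+2) x - (n+2 : ℝ) * He (n+1) x := by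
        show He (n+1+2) x = _
        simp only [He]; push_cast; ring
      have hrec2 : He (n+2) x = x * He (n+1) x - (n+1 : ℝ) * He n x := by
        simp [He]
      have step : (He (n+2) x)^2 - He (n+1) x * He (n+3) x
          = (n+1 : ℝ) * ((He (n+1) x)^2 - He n x * He (n+2) x) + (He (n+1) x)^2 := by
        rw [hrec, hrec2]; ring
      rw [Finset.sum_range_succ, mul_add, step, ih]
      rw [Nat.factorial_succ]
      push_cast
      field_simp
  refine ⟨hid, ?_⟩
  rw [hid]
  apply mul_pos (by positivity)
  apply Finset.sum_pos'
  · intro i _; positivity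
  · exact ⟨0, Finset.mem_range.mpr (Nat.succ_pos k), by simp [He]⟩
end

section
/- For every natural number k and every real x, |He_k(x)| · e^{−x²/2} ≤ sqrt(k!). -/
lemma He_rec' : ∀ (n : ℕ) (x : ℝ), x * He n x - (n : ℝ) * He (n-1) x = He (n+1) x
  | 0, x => by simp [He]
  | (m+1), x => by push_cast; rfl

lemma He_hasDerivAt : ∀ (n : ℕ) (x : ℝ), HasDerivAt (He n) ((n : ℝ) * He (n-1) x) x
  | 0, x => by simpa [He] using (hasDerivAt_const x (1:ℝ))
  | 1, x => by simpa [He] using (hasDerivAt_id' x)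
  | (n+2), x => by
    have h1 := He_hasDerivAt (n+1) x
    have h0 := He_hasDerivAt n x
    have : HasDerivAt (fun y => y * He (n+1) y - ((n:ℝ)+1) * He n y)
        (1 * He (n+1) x + x * (((n:ℝ)+1) * He n x) - ((n:ℝ)+1) * ((n:ℝ) * He (n-1) x)) x := by
      exact ((hasDerivAt_id x).mul (by exact_mod_cast h1)).sub (h0.const_mul _)
    have heq : (fun y => y * He (n+1) y - ((n:ℝ)+1) * He n y) = He (n+2) := by
      funext y; rfl
    rw [heq] at this
    convert this using 1
    have hr := He_rec' n x
    push_cast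
    nlinarith [hr]

lemma v_hasDerivAt (k : ℕ) (x : ℝ) :
    HasDerivAt (fun y => He k y * Real.exp (-y^2/2))
      (-(He (k+1) x * Real.exp (-x^2/2))) x := by
  have hexp : HasDerivAt (fun y : ℝ => Real.exp (-y^2/2)) (-x * Real.exp (-x^2/2)) x := by
    have h1 : HasDerivAt (fun y : ℝ => -y^2/2) (-x) x := by
      have := ((hasDerivAt_pow 2 x).neg).div_const 2
      refine this.congr_deriv ?_; ring
    simpa [mul_comm] using h1.exp
  have := (He_hasDerivAt k x).mul hexp
  refine this.congr_deriv ?_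
  have hr := He_rec' k x
  nlinarith [hr, Real.exp_pos (-x^2/2)]

lemma He_step (n : ℕ) (x : ℝ) : He (n+2) x = x * He (n+1) x - ((n:ℝ)+1) * He n x := rfl

lemma He_odd_zero : ∀ m : ℕ, He (2*m+1) 0 = 0
  | 0 => rfl
  | (m+1) => by
    have h : 2*(m+1)+1 = (2*m+1)+2 := by ring
    rw [h, He_step, He_odd_zero m]; ring

lemma He_zero_sq_le : ∀ n : ℕ, (He n 0)^2 ≤ (Nat.factorial n : ℝ)
  | 0 => by simp [He]
  | 1 => by simp [He]
  | (n+2) => by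
    have ih := He_zero_sq_le n
    have h : He (n+2) 0 = 0 * He (n+1) 0 - ((n:ℝ)+1) * He n 0 := rfl
    have h2 : (He (n+2) 0)^2 = ((n:ℝ)+1)^2 * (He n 0)^2 := by rw [h]; ring
    have hfac : (Nat.factorial (n+2) : ℝ) = ((n:ℝ)+2) * (((n:ℝ)+1) * (Nat.factorial n : ℝ)) := by
      rw [Nat.factorial_succ, Nat.factorial_succ]; push_cast; ring
    have hn1 : (0:ℝ) ≤ (n:ℝ)+1 := by positivity
    nlinarith [sq_nonneg (He n 0), (Nat.cast_pos (α := ℝ)).mpr (Nat.factorial_pos n)]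

theorem cramer_bound_hermite (k : ℕ) (x : ℝ) :
    |He k x| * Real.exp (-x^2 / 2) ≤ Real.sqrt (Nat.factorial k : ℝ) := by
  set E : ℝ → ℝ := fun y => Real.exp (-y^2/2) with hE
  set G : ℝ → ℝ := fun y => ((k:ℝ)+1) * (He k y * E y)^2 + (He (k+1) y * E y)^2 with hGdef
  have hG : ∀ y : ℝ, HasDerivAt G (-(2*y) * (He (k+1) y * E y)^2) y := by
    intro y
    have h1 := ((v_hasDerivAt k y).pow 2).const_mul ((k:ℝ)+1)
    have h2 := (v_hasDerivAt (k+1) y).pow 2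
    have := h1.add h2
    refine this.congr_deriv ?_
    have hrec : He (k+1+1) y = y * He (k+1) y - ((k:ℝ)+1) * He k y := rfl
    simp only [hrec, hE]
    ring
  have hdiff : Differentiable ℝ G := fun y => (hG y).differentiableAt
  have hkey : ∀ y : ℝ, G y ≤ G 0 := by
    intro y
    rcases le_total 0 y with hy | hy
    · have hanti : AntitoneOn G (Set.Ici (0:ℝ)) := by
        apply antitoneOn_of_deriv_nonpos (convex_Ici 0) hdiff.continuous.continuousOn
          (hdiff.differentiableOn)
        intro z hz
        rw [interior_Ici] at hz
        rw [(hG z).deriv]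
        have hz' : (0:ℝ) < z := hz
        nlinarith [sq_nonneg (He (k+1) z * E z)]
      exact hanti (Set.self_mem_Ici) hy hy
    · have hmono : MonotoneOn G (Set.Iic (0:ℝ)) := by
        apply monotoneOn_of_deriv_nonneg (convex_Iic 0) hdiff.continuous.continuousOn
          (hdiff.differentiableOn)
        intro z hz
        rw [interior_Iic] at hz
        rw [(hG z).deriv]
        have hz' : z < 0 := hz
        nlinarith [sq_nonneg (He (k+1) z * E z)]
      exact hmono hy Set.self_mem_Iic hy
  have hE0 : E 0 = 1 := by simp [hE]
  have hG0 : G 0 = ((k:ℝ)+1) * (He k 0)^2 + (He (k+1) 0)^2 := by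
    simp [hGdef, hE0]
  have hG0le : G 0 ≤ (Nat.factorial (k+1) : ℝ) := by
    rw [hG0]
    have hfac : (Nat.factorial (k+1) : ℝ) = ((k:ℝ)+1) * (Nat.factorial k : ℝ) := by
      rw [Nat.factorial_succ]; push_cast; ring
    rcases Nat.even_or_odd k with ⟨m, hm⟩ | ⟨m, hm⟩
    · have hodd : He (k+1) 0 = 0 := by
        have : k + 1 = 2*m+1 := by omega
        rw [this]; exact He_odd_zero m
      rw [hodd, hfac]
      have := He_zero_sq_le k
      nlinarith
    · have hodd : He k 0 = 0 := by
        have : k = 2*m+1 := by omega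
        rw [this]; exact He_odd_zero m
      rw [hodd]
      have := He_zero_sq_le (k+1)
      nlinarith
  have hk1 : (0:ℝ) < (k:ℝ)+1 := by positivity
  have hsq : (He k x * E x)^2 ≤ (Nat.factorial k : ℝ) := by
    have h1 : ((k:ℝ)+1) * (He k x * E x)^2 ≤ G x := by
      simp only [hGdef]
      nlinarith [sq_nonneg (He (k+1) x * E x)]
    have h2 : G x ≤ ((k:ℝ)+1) * (Nat.factorial k : ℝ) := by
      refine le_trans (le_trans (hkey x) hG0le) ?_
      rw [Nat.factorial_succ]; push_cast; ring_nf; exact le_refl _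
    nlinarith
  have habs : |He k x| * Real.exp (-x^2/2) = |He k x * E x| := by
    rw [abs_mul, abs_of_pos (Real.exp_pos _)]
  rw [habs, ← Real.sqrt_sq_eq_abs]
  exact Real.sqrt_le_sqrt hsq
end

section
/- Suppose k ≥ 2 is a natural number, β ≠ 0 and z are real, ξ ∈ {−1,1}, and for each j ∈ {k, k+1, k+2, k+3} we are given γ_j = (−1)^j ξ^j β He_j(z). Let q be an index in {k+1, k+2} maximizing |γ_j|. Then γ_q ≠ 0, and ξz = −(γ_{q+1} + q·γ_{q−1})/γ_q, and β = (−1)^q · γ_q / He_q(ξz). -/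
lemma He_no_common_zero : ∀ (n : ℕ) (x : ℝ), He n x = 0 → He (n+1) x = 0 → False := by
  intro n
  induction n with
  | zero => intro x h _; simp [He] at h
  | succ m ih =>
    intro x h1 h2
    have h3 : He (m+2) x = x * He (m+1) x - ((m:ℝ)+1) * He m x := rfl
    have hm : He m x = 0 := by
      have h4 : ((m:ℝ)+1) * He m x = 0 := by rw [h3, h1] at h2; linarith
      have hne : ((m:ℝ)+1) ≠ 0 := by positivity
      exact (mul_eq_zero.mp h4).resolve_left hne
    exact ih x hm h1

lemma He_parity (ξ : ℝ) (hξ : ξ * ξ = 1) : ∀ (n : ℕ) (x : ℝ), He n (ξ * x) = ξ ^ n * He n x := by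
  intro n
  induction n using Nat.strong_induction_on with
  | _ n ih =>
    match n with
    | 0 => intro x; simp [He]
    | 1 => intro x; simp [He]
    | (m+2) =>
      intro x
      have h1 := ih (m+1) (by omega) x
      have h0 := ih m (by omega) x
      have hd : He (m+2) (ξ*x) = (ξ*x) * He (m+1) (ξ*x) - ((m:ℝ)+1) * He m (ξ*x) := rfl
      have hd2 : He (m+2) x = x * He (m+1) x - ((m:ℝ)+1) * He m x := rfl
      rw [hd, hd2, h1, h0, pow_succ, pow_succ]
      linear_combination (((m:ℝ)+1) * ξ ^ m * He m x) * hξ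

theorem recover_scalars_from_hermite_values
    (k : ℕ) (hk : 2 ≤ k) (β z : ℝ) (hβ : β ≠ 0) (ξ : ℝ) (hξ : ξ = 1 ∨ ξ = -1)
    (γ : ℕ → ℝ)
    (hγ : ∀ j, k ≤ j → j ≤ k + 3 → γ j = (-1 : ℝ)^j * ξ^j * β * He j z)
    (q : ℕ) (hq : q = k + 1 ∨ q = k + 2)
    (hmax : |γ (k+1)| ≤ |γ q| ∧ |γ (k+2)| ≤ |γ q|) :
    γ q ≠ 0 ∧
    ξ * z = -((γ (q+1) + (q : ℝ) * γ (q-1)) / γ q) ∧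
    β = (-1 : ℝ)^q * γ q / He q (ξ * z) := by
  have hξsq : ξ * ξ = 1 := by rcases hξ with h | h <;> rw [h] <;> norm_num
  have hξne : ξ ≠ 0 := by rcases hξ with h | h <;> rw [h] <;> norm_num
  have hcoef : ∀ j : ℕ, ((-1 : ℝ)^j * ξ^j * β) ≠ 0 := fun j =>
    mul_ne_zero (mul_ne_zero (pow_ne_zero _ (by norm_num)) (pow_ne_zero _ hξne)) hβ
  have hHez : ∀ j, k ≤ j → j ≤ k + 3 → γ j = 0 → He j z = 0 := by
    intro j h1 h2 h0
    have hj := hγ j h1 h2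
    rw [h0] at hj
    exact ((mul_eq_zero.mp hj.symm).resolve_left (hcoef j))
  have hγq : γ q ≠ 0 := by
    intro h0
    have hz1 : γ (k+1) = 0 := by
      have h := hmax.1; rw [h0, abs_zero] at h
      exact abs_eq_zero.mp (le_antisymm h (abs_nonneg _))
    have hz2 : γ (k+2) = 0 := by
      have h := hmax.2; rw [h0, abs_zero] at h
      exact abs_eq_zero.mp (le_antisymm h (abs_nonneg _))
    exact He_no_common_zero (k+1) z (hHez (k+1) (by omega) (by omega) hz1)
      (hHez (k+2) (by omega) (by omega) hz2)
  obtain ⟨m, rfl⟩ : ∃ m, q = m + 2 := ⟨q - 2, by omega⟩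
  have hq1 := hγ (m+1) (by omega) (by omega)
  have hq2 := hγ (m+2) (by omega) (by omega)
  have hq3 := hγ (m+3) (by omega) (by omega)
  have hrec : He (m+3) z = z * He (m+2) z - ((m:ℝ)+2) * He (m+1) z := by
    show z * He (m+2) z - (((m+1:ℕ):ℝ)+1) * He (m+1) z = _
    push_cast; ring
  have hHeq : He (m+2) z ≠ 0 := fun h => hγq (by rw [hq2, h, mul_zero])
  have hp3 : (-1:ℝ)^(m+3) = -((-1:ℝ)^(m+2)) := by rw [pow_succ]; ring
  have hx3 : (ξ:ℝ)^(m+3) = ξ^(m+2) * ξ := pow_succ ξ (m+2)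
  have hx2 : (ξ:ℝ)^(m+2) = ξ^(m+1) * ξ := pow_succ ξ (m+1)
  have hp2 : (-1:ℝ)^(m+2) = -((-1:ℝ)^(m+1)) := by rw [pow_succ]; ring
  refine ⟨hγq, ?_, ?_⟩
  · show ξ * z = -((γ (m+3) + ((m+2 : ℕ) : ℝ) * γ (m+1)) / γ (m+2))
    rw [← neg_div, eq_div_iff hγq, hq1, hq2, hq3, hrec, hp3, hp2, hx3, hx2]
    push_cast
    generalize (-1:ℝ)^(m+1) = e
    linear_combination (-(((m:ℝ)+2) * e * ξ^(m+1) * β * He (m+1) z)) * hξsq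
  · show β = (-1:ℝ)^(m+2) * γ (m+2) / He (m+2) (ξ * z)
    rw [He_parity ξ hξsq (m+2) z, hq2]
    rw [eq_div_iff (mul_ne_zero (pow_ne_zero _ hξne) hHeq)]
    have hpp : (-1:ℝ)^(m+2) * (-1:ℝ)^(m+2) = 1 := by
      rw [← pow_add, Even.neg_one_pow ⟨m+2, by ring⟩]
    generalize (-1:ℝ)^(m+2) = e at hpp ⊢
    linear_combination (-(ξ^(m+2) * β * He (m+2) z)) * hpp
end

section
/- Suppose ℓ ≥ 2, α > 0, ε ∈ [0, α/2), and u, v ∈ ℝ^d are unit vectors with ‖α u^{⊗ℓ} − β v^{⊗ℓ}‖_F ≤ ε for some β > 0. Then there exists a sign ξ ∈ {−1,1} such that for all t ∈ {1,…,ℓ}, ‖u^{⊗t} − ξ^t v^{⊗t}‖_F ≤ √2·ε/α, and moreover |α − β| ≤ 3ε. -/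
set_option maxHeartbeats 800000


/-- The ℓ-fold tensor power of a vector, as a vector indexed by multi-indices. -/
def tpow {d : ℕ} (u : Fin d → ℝ) (ℓ : ℕ) : (Fin ℓ → Fin d) → ℝ :=
  fun α => ∏ t, u (α t)

lemma sum_tpow_mul (d t : ℕ) (u w : Fin d → ℝ) :
    ∑ β : Fin t → Fin d, tpow u t β * tpow w t β = (∑ j, u j * w j) ^ t := by
  have h : ∀ β : Fin t → Fin d, tpow u t β * tpow w t β = ∏ i, (u (β i) * w (β i)) := by
    intro β; simp [tpow, Finset.prod_mul_distrib]
  simp_rw [h]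
  symm
  calc (∑ j, u j * w j) ^ t = ∏ _i : Fin t, (∑ j, u j * w j) := by
        rw [Finset.prod_const, Finset.card_univ, Fintype.card_fin]
    _ = ∑ x ∈ Fintype.piFinset (fun _ => Finset.univ), ∏ i, u (x i) * w (x i) :=
        Finset.prod_univ_sum _ _
    _ = ∑ β : Fin t → Fin d, ∏ i, u (β i) * w (β i) := by rw [Fintype.piFinset_univ]

lemma sum_sq_expand (d t : ℕ) (u v : Fin d → ℝ) (a b : ℝ) :
    ∑ β : Fin t → Fin d, (a * tpow u t β - b * tpow v t β)^2
      = a^2 * (∑ j, u j * u j)^t - 2*a*b*(∑ j, u j * v j)^t + b^2 * (∑ j, v j * v j)^t := by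
  have h : ∀ β : Fin t → Fin d, (a * tpow u t β - b * tpow v t β)^2
      = a^2 * (tpow u t β * tpow u t β) - 2*a*b*(tpow u t β * tpow v t β)
        + b^2 * (tpow v t β * tpow v t β) := fun β => by ring
  simp_rw [h]
  rw [Finset.sum_add_distrib, Finset.sum_sub_distrib, ← Finset.mul_sum, ← Finset.mul_sum,
    ← Finset.mul_sum, sum_tpow_mul, sum_tpow_mul, sum_tpow_mul]

theorem close_rank_one_tensors_close_vectors
    (d ℓ : ℕ) (hℓ : 2 ≤ ℓ) (A B ε : ℝ) (hA : 0 < A) (hB : 0 < B)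
    (hε₀ : 0 ≤ ε) (hε₁ : ε < A / 2)
    (u v : Fin d → ℝ) (hu : ∑ j, (u j)^2 = 1) (hv : ∑ j, (v j)^2 = 1)
    (hclose : Real.sqrt (∑ α : Fin ℓ → Fin d, (A * tpow u ℓ α - B * tpow v ℓ α)^2) ≤ ε) :
    (∃ ξ : ℝ, (ξ = 1 ∨ ξ = -1) ∧
      ∀ t : ℕ, 1 ≤ t → t ≤ ℓ →
        Real.sqrt (∑ β : Fin t → Fin d, (tpow u t β - ξ^t * tpow v t β)^2)
          ≤ Real.sqrt 2 * ε / A) ∧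
    |A - B| ≤ 3 * ε := by
  set c : ℝ := ∑ j, u j * v j with hcdef
  have huu : (∑ j, u j * u j) = 1 := by
    rw [← hu]; exact Finset.sum_congr rfl fun j _ => (pow_two (u j)).symm
  have hvv : (∑ j, v j * v j) = 1 := by
    rw [← hv]; exact Finset.sum_congr rfl fun j _ => (pow_two (v j)).symm
  have hc2 : c^2 ≤ 1 := by
    have h := Finset.sum_mul_sq_le_sq_mul_sq Finset.univ u v
    calc c^2 ≤ (∑ j, (u j)^2) * (∑ j, (v j)^2) := h
      _ = 1 := by rw [hu, hv, mul_one]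
  have hcabs : |c| ≤ 1 := by
    rw [abs_le]; constructor <;> nlinarith [hc2]
  -- squared norm bound
  have hsum : ∑ α : Fin ℓ → Fin d, (A * tpow u ℓ α - B * tpow v ℓ α)^2
      = A^2 - 2*A*B*c^ℓ + B^2 := by
    rw [sum_sq_expand, huu, hvv, ← hcdef]; ring
  have h0 : (0:ℝ) ≤ A^2 - 2*A*B*c^ℓ + B^2 := by
    rw [← hsum]; exact Finset.sum_nonneg fun _ _ => sq_nonneg _
  have hS : A^2 - 2*A*B*c^ℓ + B^2 ≤ ε^2 := by
    have h1 : Real.sqrt (A^2 - 2*A*B*c^ℓ + B^2) ≤ ε := hsum ▸ hclose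
    nlinarith [Real.sq_sqrt h0, Real.sqrt_nonneg (A^2 - 2*A*B*c^ℓ + B^2)]
  have hcl : c^ℓ ≤ |c|^ℓ := by rw [← abs_pow]; exact le_abs_self _
  have hclle1 : |c|^ℓ ≤ 1 := pow_le_one₀ (abs_nonneg c) hcabs
  have hAB : |A - B| ≤ ε := by
    rw [abs_le]
    constructor <;> nlinarith [mul_pos hA hB, hS, hcl, hclle1,
      mul_nonneg (mul_pos hA hB).le (sub_nonneg.2 hcl),
      mul_nonneg (mul_pos hA hB).le (sub_nonneg.2 hclle1)]
  have hB2 : A ≤ 2*B := by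
    have := abs_le.mp hAB; linarith
  have hkey : A^2 * (1 - |c|^ℓ) ≤ ε^2 := by
    nlinarith [hS, sq_nonneg (A - B), mul_pos hA hB, hcl, hclle1, hB2,
      mul_nonneg (mul_pos hA hB).le (sub_nonneg.2 hcl),
      mul_nonneg (mul_nonneg (sub_nonneg.2 hB2) hA.le) (sub_nonneg.2 hclle1)]
  refine ⟨⟨if 0 ≤ c then (1:ℝ) else -1, by split_ifs <;> simp, ?_⟩, by linarith [abs_le.mp hAB]⟩
  set ξ : ℝ := if 0 ≤ c then (1:ℝ) else -1 with hξdef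
  have hξ2 : ξ^2 = 1 := by rw [hξdef]; split_ifs <;> norm_num
  have hξc : ξ * c = |c| := by
    rw [hξdef]; split_ifs with h
    · rw [one_mul, abs_of_nonneg h]
    · rw [abs_of_neg (lt_of_not_ge h)]; ring
  intro t ht1 htℓ
  have hsum2 : ∑ β : Fin t → Fin d, (tpow u t β - ξ^t * tpow v t β)^2 = 2 - 2*|c|^t := by
    have h := sum_sq_expand d t u v 1 (ξ^t)
    simp only [one_mul] at h
    rw [h, huu, hvv, ← hcdef]
    simp only [one_pow]
    have h1 : (ξ^t)^2 = 1 := by rw [← pow_mul, mul_comm, pow_mul, hξ2, one_pow]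
    have h2 : ξ^t * c^t = |c|^t := by rw [← mul_pow, hξc]
    rw [h1]
    nlinarith [h2]
  rw [hsum2]
  have hct : |c|^ℓ ≤ |c|^t := pow_le_pow_of_le_one (abs_nonneg c) hcabs htℓ
  have htarget : (Real.sqrt 2 * ε / A)^2 = 2 * ε^2 / A^2 := by
    rw [div_pow, mul_pow, Real.sq_sqrt (by norm_num : (0:ℝ) ≤ 2)]
  have hle : 2 - 2*|c|^t ≤ (Real.sqrt 2 * ε / A)^2 := by
    rw [htarget, le_div_iff₀ (by positivity)]
    nlinarith [hkey, hct]
  calc Real.sqrt (2 - 2*|c|^t) ≤ Real.sqrt ((Real.sqrt 2 * ε / A)^2) := Real.sqrt_le_sqrt hle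
    _ = Real.sqrt 2 * ε / A := Real.sqrt_sq (by positivity)
end

section
/- Let U and V be matrices with m columns each, and let krank(M) denote the Kruskal rank of M (the largest k such that every k columns of M are linearly independent). If no two columns of a d×m matrix W are parallel (so krank(Wᵀ columns) ≥ 2 viewing W's columns), then the matrix whose i-th column is w_i^{⊗m} (the m-fold Khatri–Rao power) has Kruskal rank m, i.e., the vectors w₁^{⊗m}, …, w_m^{⊗m} are linearly independent; this uses the fact that krank(U ⊙ V) ≥ min(krank(U) + krank(V) − 1, m). -/
/-- A vector avoiding finitely many hyperplanes. -/
lemma exists_dual_ne_zero {d : ℕ} {ι : Type} [Finite ι] (v : ι → (Fin d → ℝ))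
    (hv : ∀ i, v i ≠ 0) : ∃ a : Fin d → ℝ, ∀ i, ∑ x, a x * v i x ≠ 0 := by
  by_contra h
  push_neg at h
  set f : ι → ((Fin d → ℝ) →ₗ[ℝ] ℝ) := fun i => ∑ x : Fin d, (v i x) • LinearMap.proj x with hf
  have happ : ∀ i a, f i a = ∑ x, a x * v i x := by
    intro i a
    simp [hf, LinearMap.sum_apply, mul_comm]
  have hcover : ⋃ i, ((LinearMap.ker (f i) : Subspace ℝ (Fin d → ℝ)) : Set (Fin d → ℝ))
      = Set.univ := by
    ext a
    simp only [Set.mem_iUnion, Set.mem_univ, iff_true, SetLike.mem_coe, LinearMap.mem_ker]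
    obtain ⟨i, hi⟩ := h a
    exact ⟨i, by rw [happ]; exact hi⟩
  obtain ⟨i, hi⟩ := Subspace.exists_eq_top_of_iUnion_eq_univ hcover
  have : f i (v i) = 0 := by
    rw [LinearMap.ker_eq_top] at hi; simp [hi]
  rw [happ] at this
  apply hv i
  funext x
  have h0 : ∀ y ∈ Finset.univ, (0:ℝ) ≤ v i y * v i y := fun y _ => mul_self_nonneg _
  have := (Finset.sum_eq_zero_iff_of_nonneg h0).mp this x (Finset.mem_univ x)
  simpa [mul_self_eq_zero] using this

theorem tensor_powers_linearIndependent_of_pairwise_nonparallel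
    (d m : ℕ) (hm : 2 ≤ m) (w : Fin m → (Fin d → ℝ))
    (hpar : ∀ i j, i ≠ j → ∀ c : ℝ, w i ≠ c • w j) :
    LinearIndependent ℝ (fun i => tpow (w i) m) := by
  haveI : Nontrivial (Fin m) := Fin.nontrivial_iff_two_le.mpr hm
  -- all columns are nonzero
  have hw0 : ∀ i, w i ≠ 0 := by
    intro i h0
    obtain ⟨j, hj⟩ := exists_ne i
    exact hpar i j (Ne.symm hj) 0 (by simp [h0])
  -- choose a with ⟨a, w i⟩ ≠ 0
  obtain ⟨a, ha⟩ := exists_dual_ne_zero w hw0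
  set lam : Fin m → ℝ := fun i => ∑ x, a x * w i x with hlam
  -- choose b separating the ratios
  have hne : ∀ p : {p : Fin m × Fin m // p.1 ≠ p.2},
      lam p.1.2 • w p.1.1 - lam p.1.1 • w p.1.2 ≠ 0 := by
    rintro ⟨⟨i, j⟩, hij⟩ h0
    have : w i = (lam i / lam j) • w j := by
      rw [sub_eq_zero] at h0
      have hj := ha j
      funext x
      have := congrFun h0 x
      simp only [Pi.smul_apply, smul_eq_mul] at this ⊢
      field_simp [show lam j ≠ 0 from hj]
      linarith [this]
    exact hpar i j hij _ this
  obtain ⟨b, hb⟩ := exists_dual_ne_zero _ hne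
  set mu : Fin m → ℝ := fun i => ∑ x, b x * w i x with hmu
  have hb' : ∀ i j : Fin m, i ≠ j → lam j * mu i - lam i * mu j ≠ 0 := by
    intro i j hij h0
    apply hb ⟨(i, j), hij⟩
    have e1 : ∑ x, b x * (lam j * w i x) = lam j * mu i := by
      rw [hmu, Finset.mul_sum]; exact Finset.sum_congr rfl fun x _ => by ring
    have e2 : ∑ x, b x * (lam i * w j x) = lam i * mu j := by
      rw [hmu, Finset.mul_sum]; exact Finset.sum_congr rfl fun x _ => by ring
    simp only [Pi.sub_apply, Pi.smul_apply, smul_eq_mul, mul_sub]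
    rw [Finset.sum_sub_distrib, e1, e2, h0]
  -- the ratios are injective
  set t : Fin m → ℝ := fun i => mu i / lam i with ht
  have htinj : Function.Injective t := by
    intro i j hij
    by_contra hne'
    apply hb' i j hne'
    have hli := ha i
    have hlj := ha j
    have : mu i / lam i = mu j / lam j := hij
    field_simp [show lam i ≠ 0 from hli, show lam j ≠ 0 from hlj] at this
    linarith [this]
  -- linear independence
  rw [Fintype.linearIndependent_iff]
  intro g hg i
  -- the key contraction identities
  have key : ∀ k : Fin m, ∑ j, (g j * lam j ^ m) * t j ^ (k : ℕ) = 0 := by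
    intro k
    have hk : (k : ℕ) ≤ m := le_of_lt k.isLt
    set q : Fin m → (Fin d → ℝ) := fun s => if (s : ℕ) < (k : ℕ) then b else a with hq
    have hS : ∑ α : Fin m → Fin d,
        (∑ j, g j • tpow (w j) m) α * ∏ s, q s (α s) = 0 := by
      apply Finset.sum_eq_zero
      intro α _
      rw [hg]
      simp
    have hS' : ∑ α : Fin m → Fin d,
        (∑ j, g j • tpow (w j) m) α * ∏ s, q s (α s)
        = ∑ j, g j * ∏ s : Fin m, (∑ x, q s x * w j x) := by
      simp only [Finset.sum_apply, Pi.smul_apply, smul_eq_mul, tpow, Finset.sum_mul]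
      rw [Finset.sum_comm]
      apply Finset.sum_congr rfl
      intro j _
      rw [Finset.prod_univ_sum, Finset.mul_sum, Fintype.piFinset_univ]
      apply Finset.sum_congr rfl
      intro α _
      rw [mul_assoc, ← Finset.prod_mul_distrib]
      exact congrArg _ (Finset.prod_congr rfl fun s _ => mul_comm _ _)
    -- identify the contracted factor
    have hfac : ∀ j, ∏ s : Fin m, (∑ x, q s x * w j x)
        = mu j ^ (k : ℕ) * lam j ^ (m - (k : ℕ)) := by
      intro j
      have : ∀ s : Fin m, (∑ x, q s x * w j x)
          = if (s : ℕ) < (k : ℕ) then mu j else lam j := by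
        intro s
        by_cases hs : (s : ℕ) < (k : ℕ)
        · show (∑ x, (if (s : ℕ) < (k : ℕ) then b else a) x * w j x) = _
          rw [if_pos hs, if_pos hs]
        · show (∑ x, (if (s : ℕ) < (k : ℕ) then b else a) x * w j x) = _
          rw [if_neg hs, if_neg hs]
      rw [Finset.prod_congr rfl fun s _ => this s, Finset.prod_ite,
        Finset.prod_const, Finset.prod_const]
      have hfilt : Finset.filter (fun s : Fin m => (s : ℕ) < (k : ℕ)) Finset.univ
          = Finset.Iio k := by
        ext s
        simp only [Finset.mem_filter, Finset.mem_univ, true_and, Finset.mem_Iio]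
        exact Fin.lt_def.symm
      have hc1 : (Finset.filter (fun s : Fin m => (s : ℕ) < (k : ℕ)) Finset.univ).card
          = (k : ℕ) := by rw [hfilt, Fin.card_Iio]
      have hc2 : (Finset.filter (fun s : Fin m => ¬ (s : ℕ) < (k : ℕ)) Finset.univ).card
          = m - (k : ℕ) := by
        rw [Finset.filter_not, Finset.card_sdiff_of_subset (Finset.filter_subset _ _),
          Finset.card_univ, Fintype.card_fin, hc1]
      rw [hc1, hc2]
    have hterm : ∀ j, g j * (mu j ^ (k : ℕ) * lam j ^ (m - (k : ℕ)))
        = (g j * lam j ^ m) * t j ^ (k : ℕ) := by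
      intro j
      have hlj : lam j ≠ 0 := ha j
      have hmuj : mu j = t j * lam j := by
        rw [ht]; field_simp
      rw [hmuj, mul_pow, mul_assoc (t j ^ (k:ℕ)), ← pow_add,
        Nat.add_sub_cancel' hk]
      ring
    calc ∑ j, (g j * lam j ^ m) * t j ^ (k : ℕ)
        = ∑ j, g j * ∏ s : Fin m, (∑ x, q s x * w j x) := by
          apply Finset.sum_congr rfl
          intro j _
          rw [hfac j, hterm j]
      _ = 0 := by rw [← hS', hS]
  have hzero := Matrix.eq_zero_of_forall_pow_sum_mul_pow_eq_zero htinj key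
  have hgi := congrFun hzero i
  have hlami : lam i ≠ 0 := ha i
  have : g i * lam i ^ m = 0 := hgi
  rcases mul_eq_zero.mp this with h | h
  · exact h
  · exact absurd h (pow_ne_zero m hlami)
end
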